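/- Fix real q > 1 and real u with 0 < u < 1. For a partition λ with |λ| > 0 and s ≥ 1, let λ^{(s)} denote the shape obtained from λ by decreasing the size of column s by one box, and set M_{u,q}(λ^{(s)}) = 0 whenever λ^{(s)} is not a partition. Then (1/q^{λ'_1 − 1}) · M_{u,q}(λ^{(1)}) + Σ_{s=2}^{λ_1} (1/q^{λ'_s − 1} − 1/q^{λ'_{s−1}}) · M_{u,q}(λ^{(s)}) = N_{u,q}(λ). -/

import Mathlib

/-
Removing a box from column `s` of `λ` changes only the factors of index `s` and `s - 1` in
the denominator of `M_{u,q}`, so `M_{u,q}(λ^{(s)}) / M_{u,q}(λ)` is explicit. Multiplied by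
the coefficient of the `s`-th term it becomes `(q^{λ'_s} - q^{λ'_{s+1}}) / u` (also when `λ`
has no part of size `s`, as then `λ'_s = λ'_{s+1}`), and these telescope to
`(q^{λ'_1} - 1) / u`, which is `N_{u,q}(λ) / M_{u,q}(λ)`.
-/

/-- `(x/q)_i = ∏_{j=1}^i (1 - x/q^j)`. -/
noncomputable def poch (x q : ℝ) (i : ℕ) : ℝ := ∏ j ∈ Finset.Icc 1 i, (1 - x / q ^ j)

/-- The `i`-th column length `λ'_i` of the partition whose multiset of parts is `m`:
the number of parts of size at least `i` (so `λ'_i = 0` for `i > λ_1`). -/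
def col (m : Multiset ℕ) (i : ℕ) : ℕ := (m.filter (fun p => i ≤ p)).card

/-- The measure `M_{u,q}` on partitions (a partition is encoded by its multiset of parts). -/
noncomputable def Mmeas (u q : ℝ) (m : Multiset ℕ) : ℝ :=
  (∏' r : ℕ, (1 - u / q ^ (r + 1))) * u ^ m.sum /
    ∏ i ∈ Finset.Icc 1 m.sum, (q ^ ((col m i) ^ 2) * poch 1 q (m.count i))

/-- The measure `N_{u,q}` on partitions. -/
noncomputable def Nmeas (u q : ℝ) (m : Multiset ℕ) : ℝ :=
  (∏' r : ℕ, (1 - u / q ^ (r + 1))) * u ^ (m.sum - 1) * (q ^ col m 1 - 1) /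
    ∏ i ∈ Finset.Icc 1 m.sum, (q ^ ((col m i) ^ 2) * poch 1 q (m.count i))

/-- The multiset of parts of `λ^{(s)}`, the shape obtained from `λ` by decreasing column `s`
by one box: one part of size `s` is replaced by a part of size `s - 1` (deleted if `s = 1`).
This is a partition exactly when `λ` has a part of size `s`. -/
def removeBox (m : Multiset ℕ) (s : ℕ) : Multiset ℕ :=
  ((m.erase s) + {s - 1}).filter (fun p => 0 < p)

/-- `M_{u,q}(λ^{(s)})`, set to `0` when `λ^{(s)}` is not a partition
(i.e. when `λ` has no part of size `s`). -/
noncomputable def MmeasRemoved (u q : ℝ) (m : Multiset ℕ) (s : ℕ) : ℝ :=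
  if s ∈ m then Mmeas u q (removeBox m s) else 0

lemma col_eq_zero_of_sum_lt {m : Multiset ℕ} {i : ℕ} (hi : m.sum < i) : col m i = 0 := by
  rw [col, Multiset.card_eq_zero, Multiset.filter_eq_nil]
  exact fun a ha => by have := Multiset.le_sum_of_mem ha; omega

lemma count_eq_zero_of_sum_lt {m : Multiset ℕ} {i : ℕ} (hi : m.sum < i) : m.count i = 0 :=
  Multiset.count_eq_zero.mpr fun ha => by have := Multiset.le_sum_of_mem ha; omega

lemma col_add (M N : Multiset ℕ) (i : ℕ) : col (M + N) i = col M i + col N i := by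
  simp only [col, Multiset.filter_add, Multiset.card_add]

lemma col_cons (a : ℕ) (M : Multiset ℕ) (i : ℕ) :
    col (a ::ₘ M) i = col M i + if i ≤ a then 1 else 0 := by
  simp only [col, Multiset.filter_cons]
  split_ifs <;> simp [add_comm]

lemma col_filter_pos {M : Multiset ℕ} {i : ℕ} (hi : 0 < i) :
    col (M.filter (0 < ·)) i = col M i := by
  rw [col, Multiset.filter_filter]
  exact congrArg _ (Multiset.filter_congr fun p _ => ⟨fun h => h.1, fun h => ⟨h, by omega⟩⟩)

lemma col_eq_col_succ_add_count (m : Multiset ℕ) (i : ℕ) :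
    col m i = col m (i + 1) + m.count i := by
  induction m using Multiset.induction with
  | empty => simp [col]
  | cons a t ih =>
    rw [col_cons, col_cons, Multiset.count_cons, ih]
    split_ifs <;> omega

lemma sum_filter_pos (M : Multiset ℕ) : (M.filter (0 < ·)).sum = M.sum := by
  induction M using Multiset.induction with
  | empty => rfl
  | cons a M ih =>
    rw [Multiset.filter_cons]
    split_ifs <;> simp_all

lemma Finset.prod_mul_prod_eq_of_eqOn_sdiff {ι M : Type*} [CommMonoid M] [DecidableEq ι]
    {S T : Finset ι} {f g : ι → M} (hT : T ⊆ S) (hfg : ∀ i ∈ S \ T, f i = g i) :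
    (∏ i ∈ S, f i) * ∏ i ∈ T, g i = (∏ i ∈ S, g i) * ∏ i ∈ T, f i := by
  rw [← Finset.prod_sdiff hT, ← Finset.prod_sdiff hT (f := g), Finset.prod_congr rfl hfg]
  ac_rfl

lemma sum_Icc_sub_succ {G : Type*} [AddCommGroup G] (f : ℕ → G) {a b : ℕ}
    (hab : a ≤ b + 1) :
    ∑ i ∈ Finset.Icc a b, (f i - f (i + 1)) = f a - f (b + 1) := by
  rw [← Finset.Ico_add_one_right_eq_Icc, ← neg_sub, ← Finset.sum_Ico_sub _ hab]
  simp only [← Finset.sum_neg_distrib, neg_sub]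

lemma poch_succ (x q : ℝ) (k : ℕ) : poch x q (k + 1) = poch x q k * (1 - x / q ^ (k + 1)) :=
  Finset.prod_Icc_succ_top (by omega) _

lemma poch_one_pos {q : ℝ} (hq : 1 < q) (k : ℕ) : 0 < poch 1 q k :=
  Finset.prod_pos fun j hj => by
    have : 1 < q ^ j := one_lt_pow₀ hq (by simp only [Finset.mem_Icc] at hj; omega)
    rw [sub_pos, div_lt_one (by linarith)]
    exact this

noncomputable def denomFactor (q : ℝ) (m : Multiset ℕ) (i : ℕ) : ℝ :=
  q ^ (col m i ^ 2) * poch 1 q (m.count i)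

lemma denomFactor_pos {q : ℝ} (hq : 1 < q) (m : Multiset ℕ) (i : ℕ) : 0 < denomFactor q m i :=
  mul_pos (pow_pos (by linarith) _) (poch_one_pos hq _)

lemma Mmeas_eq_of_sum_le (u q : ℝ) {m : Multiset ℕ} {N : ℕ} (hN : m.sum ≤ N) :
    Mmeas u q m = (∏' r : ℕ, (1 - u / q ^ (r + 1))) * u ^ m.sum /
      ∏ i ∈ Finset.Icc 1 N, denomFactor q m i := by
  rw [Mmeas, Finset.prod_subset (Finset.Icc_subset_Icc_right hN)]
  · rfl
  · intro i hiN hi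
    have : m.sum < i := by simp only [Finset.mem_Icc] at hiN hi; omega
    simp [col_eq_zero_of_sum_lt this, count_eq_zero_of_sum_lt this, poch]

section removeBox

variable {q : ℝ} {m : Multiset ℕ} {s i : ℕ}

lemma sum_removeBox (hs : s ∈ m) (hs0 : 0 < s) : (removeBox m s).sum + 1 = m.sum := by
  rw [removeBox, sum_filter_pos, Multiset.sum_add, Multiset.sum_singleton,
    ← Multiset.sum_erase hs]
  omega

lemma col_removeBox (hs : s ∈ m) (hi : 0 < i) :
    col (removeBox m s) i + (if i = s then 1 else 0) = col m i := by
  conv_rhs => rw [← Multiset.cons_erase hs]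
  rw [removeBox, col_filter_pos hi, col_add, ← Multiset.cons_zero, col_cons, col_cons]
  simp only [col, Multiset.filter_zero, Multiset.card_zero]
  split_ifs <;> omega

lemma count_removeBox (hi : 0 < i) :
    (removeBox m s).count i = (m.erase s).count i + (if i = s - 1 then 1 else 0) := by
  simp [removeBox, hi, Multiset.count_singleton]

lemma col_removeBox_of_ne (hs : s ∈ m) (hi : 0 < i) (his : i ≠ s) :
    col (removeBox m s) i = col m i := by
  simpa [his] using col_removeBox hs hi

lemma col_removeBox_self (hs : s ∈ m) (hs0 : 0 < s) : col (removeBox m s) s + 1 = col m s := by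
  simpa using col_removeBox hs hs0

lemma count_removeBox_of_ne (hi : 0 < i) (his : i ≠ s) (his' : i ≠ s - 1) :
    (removeBox m s).count i = m.count i := by
  rw [count_removeBox hi, if_neg his', Multiset.count_erase_of_ne his, add_zero]

lemma count_removeBox_self (hs : s ∈ m) (hs0 : 0 < s) :
    (removeBox m s).count s + 1 = m.count s := by
  rw [count_removeBox hs0, if_neg (by omega), Multiset.count_erase_self]
  have := Multiset.count_pos.mpr hs
  omega

lemma count_removeBox_pred (hs2 : 2 ≤ s) :
    (removeBox m s).count (s - 1) = m.count (s - 1) + 1 := by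
  rw [count_removeBox (by omega), if_pos rfl, Multiset.count_erase_of_ne (by omega)]

lemma denomFactor_removeBox_of_ne (hs : s ∈ m) (hi : 0 < i) (his : i ≠ s) (his' : i ≠ s - 1) :
    denomFactor q (removeBox m s) i = denomFactor q m i := by
  rw [denomFactor, denomFactor, col_removeBox_of_ne hs hi his, count_removeBox_of_ne hi his his']

lemma denomFactor_removeBox_pred (hs : s ∈ m) (hs2 : 2 ≤ s) :
    denomFactor q (removeBox m s) (s - 1) =
      denomFactor q m (s - 1) * (1 - 1 / q ^ (m.count (s - 1) + 1)) := by
  rw [denomFactor, denomFactor, col_removeBox_of_ne hs (by omega) (by omega),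
    count_removeBox_pred hs2, poch_succ, mul_assoc]

lemma q_mul_denomFactor_self (hq : q ≠ 0) (hs : s ∈ m) (hs0 : 0 < s) :
    q * denomFactor q m s =
      denomFactor q (removeBox m s) s * (q ^ col m s * (q ^ col m s - q ^ col m (s + 1))) := by
  have hcol := col_removeBox_self hs hs0
  have hcount := count_removeBox_self hs hs0
  have hstep := col_eq_col_succ_add_count m s
  rw [denomFactor, denomFactor, ← hcol, ← hcount, poch_succ]
  generalize col (removeBox m s) s = a at *
  generalize (removeBox m s).count s = c at *
  obtain rfl : a = col m (s + 1) + c := by omega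
  field_simp
  ring

lemma q_mul_prod_denomFactor_removeBox_one (hq : 1 < q) (h1 : 1 ∈ m) {N : ℕ} (hN : 1 ≤ N) :
    q * ∏ i ∈ Finset.Icc 1 N, denomFactor q m i =
      (∏ i ∈ Finset.Icc 1 N, denomFactor q (removeBox m 1) i) *
        (q ^ col m 1 * (q ^ col m 1 - q ^ col m 2)) := by
  have hprod := Finset.prod_mul_prod_eq_of_eqOn_sdiff (S := Finset.Icc 1 N) (T := {1})
    (f := denomFactor q m) (g := denomFactor q (removeBox m 1)) (by simpa using hN) fun i hi => by
      simp only [Finset.mem_sdiff, Finset.mem_Icc, Finset.mem_singleton] at hi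
      exact (denomFactor_removeBox_of_ne h1 (by omega) hi.2 (by omega)).symm
  have hself := q_mul_denomFactor_self (zero_lt_one.trans hq).ne' h1 one_pos
  rw [Finset.prod_singleton, Finset.prod_singleton] at hprod
  apply mul_right_cancel₀ (denomFactor_pos hq (removeBox m 1) 1).ne'
  linear_combination q * hprod + (∏ i ∈ Finset.Icc 1 N, denomFactor q (removeBox m 1) i) * hself

lemma q_mul_prod_denomFactor_removeBox (hq : 1 < q) (hs : s ∈ m) (hs2 : 2 ≤ s) {N : ℕ}
    (hN : s ≤ N) :
    q * (1 - 1 / q ^ (m.count (s - 1) + 1)) * ∏ i ∈ Finset.Icc 1 N, denomFactor q m i =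
      (∏ i ∈ Finset.Icc 1 N, denomFactor q (removeBox m s) i) *
        (q ^ col m s * (q ^ col m s - q ^ col m (s + 1))) := by
  have hprod := Finset.prod_mul_prod_eq_of_eqOn_sdiff (S := Finset.Icc 1 N)
    (T := {s - 1, s}) (f := denomFactor q m) (g := denomFactor q (removeBox m s))
    (by intro i; simp only [Finset.mem_insert, Finset.mem_singleton, Finset.mem_Icc]; omega)
    fun i hi => by
      simp only [Finset.mem_sdiff, Finset.mem_Icc, Finset.mem_insert, Finset.mem_singleton] at hi
      exact (denomFactor_removeBox_of_ne hs (by omega) (by omega) (by omega)).symm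
  have hself := q_mul_denomFactor_self (zero_lt_one.trans hq).ne' hs (by omega)
  rw [Finset.prod_pair (by omega), Finset.prod_pair (by omega),
    denomFactor_removeBox_pred hs hs2] at hprod
  apply mul_right_cancel₀ (mul_pos (denomFactor_pos hq m (s - 1))
    (denomFactor_pos hq (removeBox m s) s)).ne'
  linear_combination q * hprod +
    (∏ i ∈ Finset.Icc 1 N, denomFactor q (removeBox m s) i) * denomFactor q m (s - 1) * hself

end removeBox

section measure

variable {q u : ℝ} {m : Multiset ℕ}

lemma coeff_mul_MmeasRemoved_one (hq : 1 < q) (hu : u ≠ 0) :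
    (q / q ^ col m 1) * MmeasRemoved u q m 1 = Mmeas u q m / u * (q ^ col m 1 - q ^ col m 2) := by
  by_cases h1 : 1 ∈ m
  · have hsum := sum_removeBox h1 one_pos
    have hden := q_mul_prod_denomFactor_removeBox_one hq h1 (Multiset.le_sum_of_mem h1)
    have hpow : u ^ m.sum = u ^ (removeBox m 1).sum * u := by rw [← hsum, pow_succ]
    rw [MmeasRemoved, if_pos h1, Mmeas_eq_of_sum_le u q (N := m.sum) (by omega),
      Mmeas_eq_of_sum_le u q le_rfl, hpow]
    have hD := Finset.prod_pos fun i (_ : i ∈ Finset.Icc 1 m.sum) => denomFactor_pos hq m i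
    have hD' := Finset.prod_pos fun i (_ : i ∈ Finset.Icc 1 m.sum) =>
      denomFactor_pos hq (removeBox m 1) i
    have hq0 : (0 : ℝ) < q := by linarith
    generalize (∏' r : ℕ, (1 - u / q ^ (r + 1))) = C
    field_simp
    linear_combination C * hden
  · have : col m 1 = col m 2 := by
      simpa [Multiset.count_eq_zero_of_notMem h1] using col_eq_col_succ_add_count m 1
    simp [MmeasRemoved, h1, this]

lemma coeff_mul_MmeasRemoved (hq : 1 < q) (hu : u ≠ 0) {s : ℕ} (hs2 : 2 ≤ s) :
    (q / q ^ col m s - 1 / q ^ col m (s - 1)) * MmeasRemoved u q m s =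
      Mmeas u q m / u * (q ^ col m s - q ^ col m (s + 1)) := by
  by_cases hs : s ∈ m
  · have hsum := sum_removeBox hs (by omega)
    have hden := q_mul_prod_denomFactor_removeBox hq hs hs2 (Multiset.le_sum_of_mem hs)
    have hpow : u ^ m.sum = u ^ (removeBox m s).sum * u := by rw [← hsum, pow_succ]
    -- turns the coefficient into `(q / q ^ col m s) * (1 - 1 / q ^ (m.count (s - 1) + 1))`,
    -- the factor of `hden`
    have hcol : q ^ col m (s - 1) = q ^ col m s * q ^ m.count (s - 1) := by
      rw [← pow_add, col_eq_col_succ_add_count m (s - 1), Nat.sub_add_cancel (by omega)]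
    rw [MmeasRemoved, if_pos hs, Mmeas_eq_of_sum_le u q (N := m.sum) (by omega),
      Mmeas_eq_of_sum_le u q le_rfl, hpow, hcol]
    have hD := Finset.prod_pos fun i (_ : i ∈ Finset.Icc 1 m.sum) => denomFactor_pos hq m i
    have hD' := Finset.prod_pos fun i (_ : i ∈ Finset.Icc 1 m.sum) =>
      denomFactor_pos hq (removeBox m s) i
    have hq0 : (0 : ℝ) < q := by linarith
    generalize (∏' r : ℕ, (1 - u / q ^ (r + 1))) = C
    rw [pow_succ] at hden
    field_simp at hden ⊢
    linear_combination C * hden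
  · have : col m s = col m (s + 1) := by
      simpa [Multiset.count_eq_zero_of_notMem hs] using col_eq_col_succ_add_count m s
    simp [MmeasRemoved, hs, this]

lemma Nmeas_eq_Mmeas_div_mul (hu : u ≠ 0) (hm : 0 < m.sum) :
    Nmeas u q m = Mmeas u q m / u * (q ^ col m 1 - 1) := by
  have hpow : u ^ m.sum = u ^ (m.sum - 1) * u := by rw [← pow_succ, Nat.sub_add_cancel hm]
  rw [Nmeas, Mmeas, hpow]
  field_simp

end measure

theorem affine_young_tableau_step_general (q u : ℝ) (hq : 1 < q) (hu0 : 0 < u)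
    (m : Multiset ℕ) (hpos : ∀ x ∈ m, 0 < x) (hne : m ≠ 0) :
    (q / q ^ col m 1) * MmeasRemoved u q m 1 +
      ∑ s ∈ Finset.Icc 2 m.sum,
        (q / q ^ col m s - 1 / q ^ col m (s - 1)) * MmeasRemoved u q m s =
    Nmeas u q m := by
  have hm : 0 < m.sum := by
    obtain ⟨x, hx⟩ := Multiset.exists_mem_of_ne_zero hne
    exact (hpos x hx).trans_le (Multiset.le_sum_of_mem hx)
  calc _ = Mmeas u q m / u * (q ^ col m 1 - q ^ col m 2) +
        ∑ s ∈ Finset.Icc 2 m.sum, Mmeas u q m / u * (q ^ col m s - q ^ col m (s + 1)) := by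
        rw [coeff_mul_MmeasRemoved_one hq hu0.ne', Finset.sum_congr rfl fun s hs =>
          coeff_mul_MmeasRemoved hq hu0.ne' (Finset.mem_Icc.mp hs).1]
    _ = Mmeas u q m / u * (q ^ col m 1 - q ^ col m (m.sum + 1)) := by
        rw [← Finset.mul_sum, sum_Icc_sub_succ (fun s => q ^ col m s) (by omega), ← mul_add]
        ring
    _ = Nmeas u q m := by
        rw [col_eq_zero_of_sum_lt (Nat.lt_succ_self _), pow_zero,
          Nmeas_eq_Mmeas_div_mul hu0.ne' hm]

/-- For any partition `λ` with `|λ| > 0`: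
`(1/q^{λ'_1 - 1}) M_{u,q}(λ^{(1)}) + Σ_{s≥2} (1/q^{λ'_s - 1} - 1/q^{λ'_{s-1}}) M_{u,q}(λ^{(s)})
  = N_{u,q}(λ)`.
Here `1/q^{λ'_s - 1}` is written as `q / q^{λ'_s}`, and the sum runs over `2 ≤ s ≤ |λ|`,
which includes all `s ≤ λ_1`; the extra terms vanish since `M_{u,q}(λ^{(s)}) = 0` there. -/
theorem affine_young_tableau_step (q u : ℝ) (hq : 1 < q) (hu0 : 0 < u) (hu1 : u < 1)
    (m : Multiset ℕ) (hpos : ∀ x ∈ m, 0 < x) (hne : m ≠ 0) :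
    (q / q ^ col m 1) * MmeasRemoved u q m 1 +
      ∑ s ∈ Finset.Icc 2 m.sum,
        (q / q ^ col m s - 1 / q ^ col m (s - 1)) * MmeasRemoved u q m s =
    Nmeas u q m :=
  affine_young_tableau_step_general q u hq hu0 m hpos hne
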